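/- Let p be a prime element of 𝒪 with p ≡ 1 (mod 3), let w, B, b ∈ 𝒪 with wBb coprime to p, and let j, k be integers with either 1 ≤ j < k or 1 < j = k. Then ∑_{A (p^k)*} (A/p^k)₃ · e(b·(wA)⁻¹/p^k) · ∑_{x (p^k)} e((A w² x³ + p^j B x)/p^k) = 0. -/

import Mathlib

/-!
Write `k = n + 2`. Multiplying by a principal unit `1 + p^(n+1) s` (`s` modulo `p`) permutes both
the residues `t` and the units `A` modulo `p^k`. In the inner sum it multiplies the summand by
`e(3 A w² t³ s / p)` (the linear term does not move because `p ∣ p^j B`), so averaging over `s`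
restricts the inner sum to `p ∣ t`. That restricted sum and `(A/p)₃` depend on `A` only modulo
`p^(n+1)`, so in the outer sum the same substitution only multiplies the summand by
`e(-b (wA)⁻¹ s / p)` with `p ∤ b (wA)⁻¹`, and averaging over `s` gives `0`.
-/

noncomputable section

namespace CubicSeries

open scoped Classical

def ω : ℂ := Complex.exp (2 * Real.pi * Complex.I / 3)

def O : Subring ℂ := Subring.closure {ω}

abbrev OK : Type _ := O

def δ : ℂ := ω - ω ^ 2

def eC (z : ℂ) : ℂ :=
  Complex.exp (2 * Real.pi * Complex.I * (z / δ + (starRingEnd ℂ) (z / δ)))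

def rep {I : Ideal OK} (x : OK ⧸ I) : OK :=
  Function.surjInv Ideal.Quotient.mk_surjective x

/-- `N(c) = |𝒪/(c)|`, the absolute norm. -/
def Nm (c : OK) : ℕ := Nat.card (OK ⧸ Ideal.span {c})

/-- `φ(c) = |(𝒪/(c))ˣ|`. -/
def totient (c : OK) : ℕ := Nat.card ((OK ⧸ Ideal.span {c})ˣ)

/-- a multiplicative inverse modulo `c` (an arbitrary element when `x` is not invertible). -/
def invMod (c x : OK) : OK :=
  rep (Ring.inverse (Ideal.Quotient.mk (Ideal.span {c}) x))

def T (A B c : OK) : ℂ :=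
  ∑ᶠ x : OK ⧸ Ideal.span {c}, eC (((A * rep x ^ 3 + B * rep x : OK) : ℂ) / (c : ℂ))

/-- The cubic residue symbol `(x/π)₃` for a prime element `π` not dividing `3`:
the unique cube root of unity congruent to `x^{(N(π)-1)/3}` mod `π`, and `0` if `π ∣ x`. -/
def cubicCharP (π x : OK) : OK :=
  if h : ∃ ζ : OK, ζ ^ 3 = 1 ∧ π ∣ ζ - x ^ ((Nm π - 1) / 3) ∧ ¬ π ∣ x then h.choose else 0

/-- The cubic residue symbol `(x/c)₃` for `c` coprime to `3`, defined via a factorization of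
`c` into a unit times prime elements (with multiplicity). -/
def cubicChar (c x : OK) : OK :=
  if h : ∃ fs : OKˣ × Multiset OK, (∀ π ∈ fs.2, Prime π) ∧ c = (fs.1 : OK) * fs.2.prod
  then (h.choose.2.map fun π => cubicCharP π x).prod
  else 0

/-- The cubic Gauss sum `g(a,c) = ∑_{x (c)*} (x/c)₃ e(ax/c)`. -/
def gaussSum (a c : OK) : ℂ :=
  ∑ᶠ u : (OK ⧸ Ideal.span {c})ˣ,
    ((cubicChar c (rep u.val) : OK) : ℂ) * eC (((a * rep u.val : OK) : ℂ) / (c : ℂ))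

/-- The Möbius function: `μ(c) = (−1)^r` if `(c)` is a product of `r` distinct prime ideals,
and `μ(c) = 0` otherwise. -/
def moebius (c : OK) : ℤ :=
  if h : ∃ s : Finset (Ideal OK), (∀ P ∈ s, Prime P) ∧ Ideal.span {c} = ∏ P ∈ s, P
  then (-1) ^ h.choose.card
  else 0

/-- `p^n` modulo `c`, where a negative exponent means the inverse of `p^{-n}` mod `c`. -/
def ppow (c p : OK) (n : ℤ) : OK :=
  if 0 ≤ n then p ^ n.toNat else invMod c (p ^ (-n).toNat)

/-- A choice of generator of a (principal) ideal. -/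
def gen (J : Ideal OK) : OK := if h : ∃ q : OK, Ideal.span {q} = J then h.choose else 0

/-- A choice of cofactor: `cofactor c q` is a `d` with `c = q·d`, when one exists. -/
def cofactor (c q : OK) : OK := if h : ∃ d : OK, c = q * d then h.choose else 0

lemma omega_eq : ω = -1 / 2 + (Real.sqrt 3 / 2 : ℝ) * Complex.I := by
  rw [ω, show 2 * Real.pi * Complex.I / 3 = ((2 * Real.pi / 3 : ℝ) : ℂ) * Complex.I by
      push_cast; ring,
    Complex.exp_mul_I, ← Complex.ofReal_cos, ← Complex.ofReal_sin,
    show 2 * Real.pi / 3 = Real.pi - Real.pi / 3 by ring, Real.cos_pi_sub, Real.sin_pi_sub,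
    Real.cos_pi_div_three, Real.sin_pi_div_three]
  push_cast; ring

lemma omega_sq_add_omega_add_one : ω ^ 2 + ω + 1 = 0 := by
  have h3 : ((Real.sqrt 3 : ℝ) : ℂ) ^ 2 = 3 := by
    rw [← Complex.ofReal_pow, Real.sq_sqrt (by norm_num)]; norm_num
  rw [omega_eq]
  push_cast
  linear_combination Complex.I ^ 2 / 4 * h3 + 3 / 4 * Complex.I_sq

lemma delta_eq : δ = (Real.sqrt 3 : ℝ) * Complex.I := by
  rw [δ, show ω - ω ^ 2 = 2 * ω + 1 by linear_combination -omega_sq_add_omega_add_one, omega_eq]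
  push_cast; ring

lemma delta_ne_zero : δ ≠ 0 := by
  rw [delta_eq]; simp [Complex.ext_iff]

lemma eC_add (z w : ℂ) : eC (z + w) = eC z * eC w := by
  simp only [eC, ← Complex.exp_add, add_div, map_add]
  ring_nf

lemma eC_ofReal_add_mul_omega (x y : ℝ) :
    eC (x + y * ω) = Complex.exp (2 * Real.pi * Complex.I * y) := by
  have hdiv : ((x : ℂ) + y * ω) / δ =
      (y / 2 : ℝ) + ((y / 2 - x) / Real.sqrt 3 : ℝ) * Complex.I := by
    rw [div_eq_iff delta_ne_zero, delta_eq, omega_eq]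
    apply Complex.ext <;> simp [field, ← sub_eq_add_neg]
  rw [eC, hdiv, Complex.add_conj]
  congr 2
  simp only [Complex.add_re, Complex.ofReal_re, Complex.re_ofReal_mul, Complex.I_re]
  push_cast; ring

lemma exists_int_of_eC_ofReal_add_mul_omega_eq_one {x y : ℝ} (h : eC (x + y * ω) = 1) :
    ∃ n : ℤ, y = n := by
  rw [eC_ofReal_add_mul_omega, Complex.exp_eq_one_iff] at h
  obtain ⟨n, hn⟩ := h
  have h2pi : 2 * Real.pi * Complex.I ≠ 0 := by simp [Real.pi_ne_zero]
  exact ⟨n, by exact_mod_cast mul_left_cancel₀ h2pi (hn.trans (mul_comm _ _))⟩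

lemma exists_ofReal_add_mul_omega (z : ℂ) : ∃ x y : ℝ, z = x + y * ω := by
  refine ⟨z.re + z.im / Real.sqrt 3, 2 * z.im / Real.sqrt 3, ?_⟩
  rw [omega_eq]
  apply Complex.ext <;> simp [field]

def ωO : OK := ⟨ω, Subring.subset_closure rfl⟩

@[simp] lemma coe_ωO : (ωO : ℂ) = ω := rfl

lemma exists_int_add_mul_omega (x : OK) : ∃ a b : ℤ, x = a + b * ωO := by
  obtain ⟨x, hx⟩ := x
  induction hx using Subring.closure_induction with
  | mem y hy => exact ⟨0, 1, by ext; simp [Set.mem_singleton_iff.1 hy, ωO]⟩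
  | zero => exact ⟨0, 0, by ext; simp⟩
  | one => exact ⟨1, 0, by ext; simp⟩
  | add y z hy' hz' hy hz =>
    obtain ⟨a, b, hy⟩ := hy
    obtain ⟨c, d, hz⟩ := hz
    exact ⟨a + c, b + d, by
      rw [show (⟨y + z, _⟩ : OK) = ⟨y, hy'⟩ + ⟨z, hz'⟩ from rfl, hy, hz]; push_cast; ring⟩
  | neg y hy' hy =>
    obtain ⟨a, b, hy⟩ := hy
    exact ⟨-a, -b, by rw [show (⟨-y, _⟩ : OK) = -⟨y, hy'⟩ from rfl, hy]; push_cast; ring⟩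
  | mul y z hy' hz' hy hz =>
    obtain ⟨a, b, hy⟩ := hy
    obtain ⟨c, d, hz⟩ := hz
    have hω : ωO ^ 2 + ωO + 1 = 0 := Subtype.ext (by simpa [ωO] using omega_sq_add_omega_add_one)
    exact ⟨a * c - b * d, a * d + b * c - b * d, by
      rw [show (⟨y * z, _⟩ : OK) = ⟨y, hy'⟩ * ⟨z, hz'⟩ from rfl, hy, hz]; push_cast
      linear_combination (b * d : OK) * hω⟩

lemma eC_coe (x : OK) : eC x = 1 := by
  obtain ⟨a, b, rfl⟩ := exists_int_add_mul_omega x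
  have := eC_ofReal_add_mul_omega a b
  push_cast [ωO] at this ⊢
  rw [this, mul_comm]
  exact Complex.exp_int_mul_two_pi_mul_I b

instance : Module.Finite ℤ OK := by
  refine Module.Finite.of_surjective
    ((LinearMap.toSpanSingleton ℤ OK 1).coprod (LinearMap.toSpanSingleton ℤ OK ωO)) ?_
  intro x
  obtain ⟨a, b, rfl⟩ := exists_int_add_mul_omega x
  exact ⟨(a, b), by simp⟩

lemma finite_quotient {c : OK} (hc : c ≠ 0) : Finite (OK ⧸ Ideal.span {c}) :=
  have : Module.Free ℤ OK := Module.free_of_finite_type_torsion_free'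
  Ideal.finiteQuotientOfFreeOfNeBot _ (by simpa using hc)

lemma mk_rep {I : Ideal OK} (x : OK ⧸ I) : Ideal.Quotient.mk I (rep x) = x :=
  Function.surjInv_eq _ x

lemma mk_eq_mk_iff_dvd {c x y : OK} :
    Ideal.Quotient.mk (Ideal.span {c}) x = Ideal.Quotient.mk (Ideal.span {c}) y ↔ c ∣ x - y := by
  rw [Ideal.Quotient.eq, Ideal.mem_span_singleton]

def E (c x : OK) : ℂ := eC (x / c)

lemma E_add (c x y : OK) : E c (x + y) = E c x * E c y := by
  rw [E, E, E, ← eC_add, Subring.coe_add, add_div]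

lemma E_eq_one_of_dvd {c x : OK} (h : c ∣ x) : E c x = 1 := by
  obtain ⟨d, rfl⟩ := h
  rcases eq_or_ne (c : ℂ) 0 with hc | hc
  · simpa [E, hc] using eC_coe 0
  · rw [E, Subring.coe_mul, mul_div_cancel_left₀ _ hc, eC_coe]

lemma E_congr {c x y : OK} (h : c ∣ x - y) : E c x = E c y := by
  rw [← sub_add_cancel x y, E_add, E_eq_one_of_dvd h, one_mul]

lemma E_mul_right {d : OK} (hd : d ≠ 0) (c x : OK) : E (c * d) (x * d) = E c x := by
  rw [E, E, Subring.coe_mul, Subring.coe_mul, mul_div_mul_right]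
  exact_mod_cast hd

lemma E_pow_succ_mul_pow {p : OK} (hp : p ≠ 0) (n : ℕ) (x : OK) :
    E (p ^ (n + 1)) (x * p ^ n) = E p x := by
  rw [pow_succ', E_mul_right (pow_ne_zero n hp)]

lemma dvd_of_E_eq_one {p c : OK} (hp : p ≠ 0) (h₁ : E p c = 1) (hω : E p (c * ωO) = 1) :
    p ∣ c := by
  -- writing `c / p = x + y ω`, the two hypotheses say `y ∈ ℤ` and `x - y ∈ ℤ`
  have hpC : (p : ℂ) ≠ 0 := by exact_mod_cast hp
  obtain ⟨x, y, hxy⟩ := exists_ofReal_add_mul_omega (c / p)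
  rw [E, hxy] at h₁
  have hzω : ((c * ωO : OK) : ℂ) / p = ((-y : ℝ) : ℂ) + ((x - y : ℝ) : ℂ) * ω := by
    rw [Subring.coe_mul, mul_div_right_comm, hxy, coe_ωO]
    push_cast
    linear_combination (y : ℂ) * omega_sq_add_omega_add_one
  rw [E, hzω] at hω
  obtain ⟨n, hn⟩ := exists_int_of_eC_ofReal_add_mul_omega_eq_one h₁
  obtain ⟨m, hm⟩ := exists_int_of_eC_ofReal_add_mul_omega_eq_one hω
  refine ⟨(m + n : ℤ) + (n : ℤ) * ωO, Subtype.ext ?_⟩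
  rw [div_eq_iff hpC] at hxy
  rw [Subring.coe_mul, hxy, show x = (x - y) + y by ring, hm, hn]
  push_cast [ωO]
  ring

lemma E_mul_congr {p x y : OK} (c : OK)
    (h : Ideal.Quotient.mk (Ideal.span {p}) x = Ideal.Quotient.mk (Ideal.span {p}) y) :
    E p (c * x) = E p (c * y) :=
  E_congr (by rw [← mul_sub]; exact (mk_eq_mk_iff_dvd.1 h).mul_left c)

lemma sum_E_mul_rep {p : OK} (hp : p ≠ 0) [Fintype (OK ⧸ Ideal.span {p})] (c : OK) :
    ∑ q : OK ⧸ Ideal.span {p}, E p (c * rep q) = if p ∣ c then (Nm p : ℂ) else 0 := by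
  split_ifs with hc
  · simp [E_eq_one_of_dvd (hc.mul_right _), Nm, Nat.card_eq_fintype_card]
  · let ψ : AddChar (OK ⧸ Ideal.span {p}) ℂ :=
      { toFun := fun q => E p (c * rep q)
        map_zero_eq_one' := by
          rw [E_mul_congr c (y := 0) (by rw [mk_rep, map_zero]), mul_zero]
          exact E_eq_one_of_dvd (dvd_zero p)
        map_add_eq_mul' := fun q q' => by
          rw [← E_add, ← mul_add]
          exact E_mul_congr c (by rw [mk_rep, map_add, mk_rep, mk_rep]) }
    have hψ (s : OK) : ψ (Ideal.Quotient.mk _ s) = E p (c * s) := E_mul_congr c (mk_rep _)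
    refine AddChar.sum_eq_zero_of_ne_one (ψ := ψ) fun h => hc (dvd_of_E_eq_one hp ?_ ?_)
    · have h₁ := DFunLike.congr_fun h (Ideal.Quotient.mk _ 1)
      rwa [hψ, mul_one, AddChar.one_apply] at h₁
    · have hω := DFunLike.congr_fun h (Ideal.Quotient.mk _ ωO)
      rwa [hψ, AddChar.one_apply] at hω

/-- Average the twisted sums over `s` modulo `p`; by `sum_E_mul_rep` only the terms with
`p ∣ c x` survive. -/
lemma sum_eq_sum_ite_dvd_of_twist {ι : Type*} [Fintype ι] {p : OK} (hp : p ≠ 0) (f : ι → ℂ)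
    (c : ι → OK) (σ : OK → Equiv.Perm ι) (hσ : ∀ s x, f (σ s x) = f x * E p (c x * s)) :
    ∑ x, f x = ∑ x, if p ∣ c x then f x else 0 := by
  have := finite_quotient hp
  have : Fintype (OK ⧸ Ideal.span {p}) := Fintype.ofFinite _
  have hN : (Nm p : ℂ) ≠ 0 := Nat.cast_ne_zero.2 Nat.card_pos.ne'
  apply mul_left_cancel₀ hN
  calc (Nm p : ℂ) * ∑ x, f x = ∑ q : OK ⧸ Ideal.span {p}, ∑ x, f (σ (rep q) x) := by
        simp [Equiv.sum_comp, Nm, Nat.card_eq_fintype_card]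
    _ = ∑ x, f x * ∑ q : OK ⧸ Ideal.span {p}, E p (c x * rep q) := by
        simp only [hσ, Finset.mul_sum]
        exact Finset.sum_comm
    _ = (Nm p : ℂ) * ∑ x, if p ∣ c x then f x else 0 := by
        simp only [sum_E_mul_rep hp, Finset.mul_sum]
        congr! 1 with x
        split_ifs <;> ring

lemma isUnit_mk_of_isCoprime {c x : OK} (h : IsCoprime x c) :
    IsUnit (Ideal.Quotient.mk (Ideal.span {c}) x) := by
  obtain ⟨a, b, hab⟩ := h
  refine IsUnit.of_mul_eq_one (Ideal.Quotient.mk _ a) ?_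
  rw [← map_mul, ← map_one (Ideal.Quotient.mk _), mk_eq_mk_iff_dvd]
  exact ⟨-b, by linear_combination hab⟩

lemma not_dvd_of_isUnit_mk {p c x : OK} (hp : ¬ IsUnit p) (hpc : p ∣ c)
    (h : IsUnit (Ideal.Quotient.mk (Ideal.span {c}) x)) : ¬ p ∣ x := by
  intro hx
  obtain ⟨v, hv⟩ := h.exists_right_inv
  rw [← mk_rep v, ← map_mul, ← map_one (Ideal.Quotient.mk _), mk_eq_mk_iff_dvd] at hv
  exact hp (isUnit_of_dvd_one ((dvd_iff_dvd_of_dvd_sub (hpc.trans hv)).1 (hx.mul_right _)))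

lemma cubicCharP_congr {p x y : OK} (h : p ∣ x - y) : cubicCharP p x = cubicCharP p y := by
  have hpow (ζ : OK) (M : ℕ) : p ∣ ζ - x ^ M ↔ p ∣ ζ - y ^ M := by
    refine dvd_iff_dvd_of_dvd_sub ?_
    rw [sub_sub_sub_cancel_left]
    exact (dvd_sub_comm.1 h).trans (sub_dvd_pow_sub_pow y x M)
  simp only [cubicCharP, hpow, dvd_iff_dvd_of_dvd_sub h]

def principalUnit (p s : OK) (n : ℕ) : (OK ⧸ Ideal.span {p ^ (n + 2)})ˣ :=
  Units.mkOfMulEqOne (Ideal.Quotient.mk _ (1 + p ^ (n + 1) * s))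
    (Ideal.Quotient.mk _ (1 - p ^ (n + 1) * s)) (by
      rw [← map_mul, ← map_one (Ideal.Quotient.mk _), mk_eq_mk_iff_dvd]
      exact ⟨-(p ^ n * s ^ 2), by ring⟩)

lemma mk_rep_mul_principalUnit {p : OK} (s : OK) {n : ℕ} (x : OK ⧸ Ideal.span {p ^ (n + 2)}) :
    Ideal.Quotient.mk (Ideal.span {p ^ (n + 2)}) (rep (x * (principalUnit p s n : OK ⧸ _))) =
      Ideal.Quotient.mk (Ideal.span {p ^ (n + 2)}) (rep x * (1 + p ^ (n + 1) * s)) := by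
  rw [mk_rep, map_mul, mk_rep]
  rfl

lemma sum_E_cubic_eq_sum_dvd {p a β : OK} (hp : Prime p) (h3 : ¬ p ∣ 3) (ha : ¬ p ∣ a)
    (hβ : p ∣ β) (n : ℕ) [Fintype (OK ⧸ Ideal.span {p ^ (n + 2)})] :
    ∑ t : OK ⧸ Ideal.span {p ^ (n + 2)}, E (p ^ (n + 2)) (a * rep t ^ 3 + β * rep t) =
      ∑ t : OK ⧸ Ideal.span {p ^ (n + 2)},
        if p ∣ rep t then E (p ^ (n + 2)) (a * rep t ^ 3 + β * rep t) else 0 := by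
  obtain ⟨β, rfl⟩ := hβ
  have hdvd (x : OK) : p ∣ 3 * a * x ^ 3 ↔ p ∣ x := by
    refine ⟨fun h => hp.dvd_of_dvd_pow ((hp.dvd_mul.1 h).resolve_left ?_), fun h => ?_⟩
    · exact fun h' => (hp.dvd_mul.1 h').elim h3 ha
    · exact (h.pow three_ne_zero).mul_left _
  rw [sum_eq_sum_ite_dvd_of_twist hp.ne_zero _ (fun t => 3 * a * rep t ^ 3)
    (fun s => (Units.mulRight (principalUnit p s n)))]
  · simp only [hdvd]
  intro s t
  simp only [Units.mulRight_apply]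
  have hmk := mk_rep_mul_principalUnit s t
  set x := rep t
  calc _ = E (p ^ (n + 2))
        (a * (x * (1 + p ^ (n + 1) * s)) ^ 3 + p * β * (x * (1 + p ^ (n + 1) * s))) :=
        E_congr (mk_eq_mk_iff_dvd.1 (by simp only [map_add, map_mul, map_pow, hmk]))
    _ = E (p ^ (n + 2)) ((a * x ^ 3 + p * β * x) + 3 * a * x ^ 3 * s * p ^ (n + 1) + p ^ (n + 2) *
          (a * x ^ 3 * (3 * p ^ n * s ^ 2 + p ^ (2 * n + 1) * s ^ 3) + β * x * s)) := by
        congr 1; ring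
    _ = E (p ^ (n + 2)) (a * x ^ 3 + p * β * x) * E p (3 * a * x ^ 3 * s) := by
        rw [E_add, E_add, E_eq_one_of_dvd (dvd_mul_right _ _), mul_one,
          E_pow_succ_mul_pow hp.ne_zero]

lemma sum_ite_dvd_E_cubic_congr {p a a' β : OK} {n : ℕ} (ha : p ^ (n + 1) ∣ a - a')
    [Fintype (OK ⧸ Ideal.span {p ^ (n + 2)})] :
    ∑ t : OK ⧸ Ideal.span {p ^ (n + 2)},
        (if p ∣ rep t then E (p ^ (n + 2)) (a * rep t ^ 3 + β * rep t) else 0) =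
      ∑ t : OK ⧸ Ideal.span {p ^ (n + 2)},
        if p ∣ rep t then E (p ^ (n + 2)) (a' * rep t ^ 3 + β * rep t) else 0 := by
  refine Finset.sum_congr rfl fun t _ => ite_congr rfl (fun ht => ?_) fun _ => rfl
  obtain ⟨d, hd⟩ := ha
  obtain ⟨y, hy⟩ := ht
  exact E_congr ⟨d * p ^ 2 * y ^ 3, by rw [hy]; linear_combination (p * y) ^ 3 * hd⟩

lemma sum_units_mul_E_inv_eq_zero {p w b : OK} (hp : Prime p) (hw : IsCoprime w p)
    (hb : ¬ p ∣ b) (n : ℕ) (g : OK → ℂ) (hg : ∀ x y, p ^ (n + 1) ∣ x - y → g x = g y)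
    [Fintype (OK ⧸ Ideal.span {p ^ (n + 2)})ˣ] :
    ∑ u : (OK ⧸ Ideal.span {p ^ (n + 2)})ˣ,
      g (rep u.val) * E (p ^ (n + 2)) (b * invMod (p ^ (n + 2)) (w * rep u.val)) = 0 := by
  obtain ⟨W, hW⟩ := isUnit_mk_of_isCoprime (c := p ^ (n + 2)) hw.pow_right
  have hinv (u : (OK ⧸ Ideal.span {p ^ (n + 2)})ˣ) :
      Ideal.Quotient.mk (Ideal.span {p ^ (n + 2)}) (invMod (p ^ (n + 2)) (w * rep u.val)) =
        ((W * u)⁻¹ : (OK ⧸ Ideal.span {p ^ (n + 2)})ˣ) := by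
    rw [invMod, mk_rep, map_mul, mk_rep, ← hW, ← Units.val_mul, Ring.inverse_unit]
  have hnd (u : (OK ⧸ Ideal.span {p ^ (n + 2)})ˣ) :
      ¬ p ∣ -(b * invMod (p ^ (n + 2)) (w * rep u.val)) := by
    rw [dvd_neg, hp.dvd_mul, not_or]
    exact ⟨hb, not_dvd_of_isUnit_mk hp.not_isUnit (dvd_pow_self p (by omega))
      (hinv u ▸ Units.isUnit _)⟩
  rw [sum_eq_sum_ite_dvd_of_twist hp.ne_zero _
    (fun u => -(b * invMod (p ^ (n + 2)) (w * rep u.val)))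
    (fun s => Equiv.mulRight (principalUnit p s n))]
  · simp [hnd]
  intro s u
  set ι := invMod (p ^ (n + 2)) (w * rep u.val)
  simp only [Equiv.coe_mulRight, Units.val_mul]
  have hmk := mk_eq_mk_iff_dvd.1 (mk_rep_mul_principalUnit s u.val)
  have hgu : g (rep (u.val * (principalUnit p s n : OK ⧸ _))) = g (rep u.val) :=
    hg _ _ ((dvd_add ((pow_dvd_pow p (n + 1).le_succ).trans hmk)
      (dvd_mul_right _ (rep u.val * s))).trans (dvd_of_eq (by ring)))
  have hι : Ideal.Quotient.mk (Ideal.span {p ^ (n + 2)})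
      (invMod (p ^ (n + 2)) (w * rep (u.val * (principalUnit p s n : OK ⧸ _)))) =
        Ideal.Quotient.mk (Ideal.span {p ^ (n + 2)}) (ι * (1 - p ^ (n + 1) * s)) := by
    rw [← Units.val_mul, hinv, map_mul, hinv, ← mul_assoc, mul_inv_rev, Units.val_mul, mul_comm]
    rfl
  rw [hgu, E_mul_congr b hι, mul_assoc, ← E_pow_succ_mul_pow hp.ne_zero (n + 1), ← E_add]
  congr 2
  ring

theorem stmt5 (p w B b : OK) (hp : Prime p) (hp3 : (3 : OK) ∣ p - 1)
    (hco : IsCoprime (w * B * b) p) (j k : ℕ)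
    (hjk : (1 ≤ j ∧ j < k) ∨ (1 < j ∧ j = k)) :
    ∑ᶠ u : (OK ⧸ Ideal.span {p ^ k})ˣ,
      ((cubicCharP p (rep u.val) ^ k : OK) : ℂ) *
        eC (((b * invMod (p ^ k) (w * rep u.val) : OK) : ℂ) / ((p ^ k : OK) : ℂ)) *
        ∑ᶠ t : OK ⧸ Ideal.span {p ^ k},
          eC (((rep u.val * w ^ 2 * rep t ^ 3 + p ^ j * B * rep t : OK) : ℂ) /
            ((p ^ k : OK) : ℂ)) = 0 := by
  obtain ⟨n, rfl⟩ : ∃ n, k = n + 2 := ⟨k - 2, by omega⟩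
  have h3 : ¬ p ∣ 3 := fun h => hp.not_isUnit
    (isUnit_of_dvd_one ((dvd_iff_dvd_of_dvd_sub (h.trans hp3)).1 dvd_rfl))
  have hw : IsCoprime w p := hco.of_mul_left_left.of_mul_left_left
  have hwp : ¬ p ∣ w := fun h => hp.not_isUnit (hw.isUnit_of_dvd' h dvd_rfl)
  have hb : ¬ p ∣ b := fun h => hp.not_isUnit (hco.of_mul_left_right.isUnit_of_dvd' h dvd_rfl)
  have hβ : p ∣ p ^ j * B := (dvd_pow_self p (by omega)).mul_right B
  have := finite_quotient (pow_ne_zero (n + 2) hp.ne_zero)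
  have : Fintype (OK ⧸ Ideal.span {p ^ (n + 2)}) := Fintype.ofFinite _
  simp only [finsum_eq_sum_of_fintype, ← E.eq_1]
  let g (a : OK) : ℂ := ((cubicCharP p a ^ (n + 2) : OK) : ℂ) *
    ∑ t : OK ⧸ Ideal.span {p ^ (n + 2)},
      if p ∣ rep t then E (p ^ (n + 2)) (a * w ^ 2 * rep t ^ 3 + p ^ j * B * rep t) else 0
  have hg (x y : OK) (hxy : p ^ (n + 1) ∣ x - y) : g x = g y := by
    simp only [g, cubicCharP_congr ((dvd_pow_self p (by omega)).trans hxy),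
      sum_ite_dvd_E_cubic_congr (by rw [← sub_mul]; exact hxy.mul_right (w ^ 2))]
  calc _ = ∑ u : (OK ⧸ Ideal.span {p ^ (n + 2)})ˣ,
        g (rep u.val) * E (p ^ (n + 2)) (b * invMod (p ^ (n + 2)) (w * rep u.val)) := by
        refine Finset.sum_congr rfl fun u _ => ?_
        have hu := not_dvd_of_isUnit_mk hp.not_isUnit (dvd_pow_self p (by omega))
          (mk_rep u.val ▸ u.isUnit)
        rw [sum_E_cubic_eq_sum_dvd hp h3 (fun h => (hp.dvd_mul.1 h).elim hu
          (fun h => hwp (hp.dvd_of_dvd_pow h))) hβ n, mul_right_comm]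
    _ = 0 := sum_units_mul_E_inv_eq_zero hp hw hb n g hg

end CubicSeries
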